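/- Let X be a complete ultrametric space satisfying: (1) the set of balls of nonzero diameter in X is countable; (2) for every sequence of balls D_k with D_{k+1} ⊊ D_k for all k, the diameters of D_k tend to zero; (3) every ball of nonzero diameter is the union of finitely many of its maximal proper subballs. Let ν be a Borel measure on X that is finite on every ball, and suppose the supremum of ν(B) over all balls B of X is infinite (X contains an increasing sequence of balls of measure tending to infinity). Then the closed linear span in L²(X,ν) of the union of the subspaces V⁰_B, where B ranges over all balls of nonzero diameter, is the whole space L²(X,ν). -/

import Mathlib

/-!
Orthogonality to `V⁰_B` says exactly that sibling maximal subballs of `B` carry the same average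
of `f`; summing over the finite cover of `B`, a maximal subball has the same average as its
parent. Descending from a ball `E` to a subball `C` through maximal subballs, a chain that is
finite by the shrinking condition unless `C` is a non-isolated point (where one passes to the
limit), `f` has the same average on `C` as on `E`. By Cauchy–Schwarz,
`|∫_C f| = ν(C) |∫_E f| / ν(E) ≤ ν(C) ‖f‖ / √ν(E)`, and `ν(E)` is unbounded, so `∫_C f = 0`.
Finally, the balls form a π-system generating the Borel σ-algebra (every open set is a union of
countably many balls, because there are only countably many isolated points), so `f = 0`.
-/

open MeasureTheory

/-- A ball in a metric space: a closed ball of nonnegative radius. -/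
def IsBall {X : Type*} [MetricSpace X] (B : Set X) : Prop :=
  ∃ (z : X) (r : ℝ), 0 ≤ r ∧ B = Metric.closedBall z r

/-- `B'` is a maximal proper subball of `B`. -/
def IsMaxSubball {X : Type*} [MetricSpace X] (B' B : Set X) : Prop :=
  IsBall B' ∧ B' ⊂ B ∧ ∀ B'' : Set X, IsBall B'' → ¬ (B' ⊂ B'' ∧ B'' ⊂ B)

/-- `V⁰_B`: elements of `L²(X,ν)` that are a.e. equal to a finite linear
combination of indicator functions of maximal proper subballs of `B` and have
zero mean. -/
def V0 {X : Type*} [MetricSpace X] [MeasurableSpace X] (ν : Measure X) (B : Set X) :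
    Set (MeasureTheory.Lp ℂ 2 ν) :=
  {f | (∃ (F : Finset (Set X)) (c : Set X → ℂ),
          (∀ C ∈ F, IsMaxSubball C B) ∧
          ∀ᵐ x ∂ν, f x = ∑ C ∈ F, c C * Set.indicator C (fun _ => (1 : ℂ)) x) ∧
       ∫ x, f x ∂ν = 0}

open Metric Filter Topology
open scoped InnerProductSpace

section

variable {X : Type*} [MetricSpace X]

def StrictBallChainsShrink (X : Type*) [MetricSpace X] : Prop :=
  ∀ D : ℕ → Set X, (∀ k, IsBall (D k)) → (∀ k, D (k + 1) ⊂ D k) →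
    Tendsto (fun k => diam (D k)) atTop (𝓝 0)

def MaxSubballsCover (X : Type*) [MetricSpace X] : Prop :=
  ∀ B : Set X, IsBall B → 0 < diam B →
    ∃ F : Finset (Set X), (∀ C ∈ F, IsMaxSubball C B) ∧ B = ⋃ C ∈ F, C

namespace IsBall

variable {B C : Set X}

lemma nonempty (hB : IsBall B) : B.Nonempty := by
  obtain ⟨z, r, hr, rfl⟩ := hB
  exact ⟨z, mem_closedBall_self hr⟩

lemma isBounded (hB : IsBall B) : Bornology.IsBounded B := by
  obtain ⟨z, r, -, rfl⟩ := hB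
  exact isBounded_closedBall

lemma measurableSet [MeasurableSpace X] [OpensMeasurableSpace X] (hB : IsBall B) :
    MeasurableSet B := by
  obtain ⟨z, r, -, rfl⟩ := hB
  exact measurableSet_closedBall

lemma singleton (x : X) : IsBall {x} := ⟨x, 0, le_rfl, closedBall_zero.symm⟩

lemma diam_pos_iff (hB : IsBall B) : 0 < diam B ↔ B.Nontrivial :=
  ⟨fun h => Set.not_subsingleton_iff.mp fun hs => h.ne' (diam_subsingleton hs),
    fun h => diam_pos h hB.isBounded⟩

lemma eq_singleton_of_not_diam_pos (hB : IsBall B) {x : X} (hx : x ∈ B) (hd : ¬ 0 < diam B) :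
    B = {x} :=
  (Set.not_nontrivial_iff.mp (hB.diam_pos_iff.not.mp hd)).eq_singleton_of_mem hx

lemma exists_superset (hB : IsBall B) (hC : IsBall C) :
    ∃ D, IsBall D ∧ B ⊆ D ∧ C ⊆ D := by
  obtain ⟨z, r, hr, rfl⟩ := hB
  obtain ⟨w, s, hs, rfl⟩ := hC
  refine ⟨closedBall z (r + s + dist w z), ⟨z, _, by positivity, rfl⟩,
    closedBall_subset_closedBall (by linarith [dist_nonneg (x := w) (y := z)]),
    closedBall_subset_closedBall' (by linarith)⟩

variable [IsUltrametricDist X]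

lemma eq_closedBall_of_mem (hB : IsBall B) {x : X} (hx : x ∈ B) :
    ∃ r, 0 ≤ r ∧ B = closedBall x r := by
  obtain ⟨z, r, hr, rfl⟩ := hB
  exact ⟨r, hr, IsUltrametricDist.closedBall_eq_of_mem hx⟩

lemma subset_or_subset (hB : IsBall B) (hC : IsBall C) (hBC : (B ∩ C).Nonempty) :
    B ⊆ C ∨ C ⊆ B := by
  obtain ⟨x, hxB, hxC⟩ := hBC
  obtain ⟨r, -, rfl⟩ := hB.eq_closedBall_of_mem hxB
  obtain ⟨s, -, rfl⟩ := hC.eq_closedBall_of_mem hxC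
  exact (le_total r s).imp closedBall_subset_closedBall closedBall_subset_closedBall

end IsBall

section Ultrametric

variable [IsUltrametricDist X] {B C C₁ C₂ : Set X}

lemma isPiSystem_setOf_isBall : IsPiSystem {B : Set X | IsBall B} := by
  intro B hB C hC hBC
  rcases IsBall.subset_or_subset hB hC hBC with h | h
  · rwa [Set.inter_eq_self_of_subset_left h]
  · rwa [Set.inter_eq_self_of_subset_right h]

lemma IsMaxSubball.disjoint (h₁ : IsMaxSubball C₁ B) (h₂ : IsMaxSubball C₂ B) (hne : C₁ ≠ C₂) :
    Disjoint C₁ C₂ := by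
  rw [Set.disjoint_iff_inter_eq_empty, ← Set.not_nonempty_iff_eq_empty]
  intro h
  rcases h₁.1.subset_or_subset h₂.1 h with h | h
  · exact h₁.2.2 C₂ h₂.1 ⟨ssubset_of_ne_of_subset hne h, h₂.2.1⟩
  · exact h₂.2.2 C₁ h₁.1 ⟨ssubset_of_ne_of_subset hne.symm h, h₁.2.1⟩

lemma exists_mem_superset_of_isMaxSubball_cover {F : Finset (Set X)}
    (hF : ∀ C' ∈ F, IsMaxSubball C' B) (hcov : B = ⋃ C' ∈ F, C') (hC : IsBall C) (hCB : C ⊂ B) :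
    ∃ C' ∈ F, C ⊆ C' := by
  obtain ⟨x, hx⟩ := hC.nonempty
  obtain ⟨C', hC'F, hxC'⟩ := Set.mem_iUnion₂.mp (hcov ▸ hCB.1 hx)
  refine ⟨C', hC'F, ?_⟩
  rcases hC.subset_or_subset (hF C' hC'F).1 ⟨x, hx, hxC'⟩ with h | h
  · exact h
  · rcases eq_or_ssubset_of_subset h with rfl | h
    · exact subset_rfl
    · exact absurd ⟨h, hCB⟩ ((hF C' hC'F).2.2 C hC)

lemma finite_setOf_isMaxSubball (h3 : MaxSubballsCover X) (hB : IsBall B) (hd : 0 < diam B) :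
    {C | IsMaxSubball C B}.Finite := by
  obtain ⟨F, hF, hcov⟩ := h3 B hB hd
  refine F.finite_toSet.subset fun C hC => ?_
  obtain ⟨C', hC'F, hCC'⟩ := exists_mem_superset_of_isMaxSubball_cover hF hcov hC.1 hC.2.1
  rcases eq_or_ssubset_of_subset hCC' with rfl | h
  · exact hC'F
  · exact absurd ⟨h, (hF C' hC'F).2.1⟩ (hC.2.2 C' (hF C' hC'F).1)

end Ultrametric

lemma StrictBallChainsShrink.wellFounded (h2 : StrictBallChainsShrink X) {δ : ℝ} (hδ : 0 < δ) :
    WellFounded fun C B : Set X => IsBall C ∧ δ ≤ diam C ∧ C ⊂ B := by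
  refine wellFounded_iff_isEmpty_descending_chain.mpr ⟨fun ⟨D, hD⟩ => ?_⟩
  have hlim := h2 (fun k => D (k + 1)) (fun k => (hD k).1) (fun k => (hD (k + 1)).2.2)
  obtain ⟨k, hk⟩ := (hlim.eventually (gt_mem_nhds hδ)).exists
  exact (hD k).2.1.not_gt hk

lemma exists_isMaxSubball_singleton (h2 : StrictBallChainsShrink X) (h3 : MaxSubballsCover X)
    {x y : X} (hxy : x ≠ y) {r : ℝ} (hr : 0 < r) (hx : closedBall x r = {x}) :
    ∃ B, (IsBall B ∧ 0 < diam B) ∧ IsMaxSubball {x} B := by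
  set S := {B : Set X | (IsBall B ∧ 0 < diam B) ∧ x ∈ B}
  have hr_le : ∀ B ∈ S, r ≤ diam B := by
    rintro B ⟨⟨hB, hd⟩, hxB⟩
    obtain ⟨z, hzB, hzx⟩ := (hB.diam_pos_iff.mp hd).exists_ne x
    have hrz : r < dist z x := not_le.mp fun h => hzx (hx ▸ mem_closedBall.mpr h :)
    exact hrz.le.trans (dist_le_diam_of_mem hB.isBounded hzB hxB)
  have hS : S.Nonempty := by
    refine ⟨closedBall x (dist y x), ⟨⟨x, _, dist_nonneg, rfl⟩, ?_⟩,
      mem_closedBall_self dist_nonneg⟩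
    exact diam_pos ⟨x, mem_closedBall_self dist_nonneg, y, mem_closedBall.mpr le_rfl, hxy⟩
      isBounded_closedBall
  obtain ⟨B, ⟨⟨hB, hd⟩, hxB⟩, hmin⟩ := (h2.wellFounded hr).has_min S hS
  obtain ⟨F, hF, hcov⟩ := h3 B hB hd
  obtain ⟨C, hCF, hxC⟩ := Set.mem_iUnion₂.mp (hcov ▸ hxB)
  have hC := hF C hCF
  refine ⟨B, ⟨hB, hd⟩, ?_⟩
  by_cases hdC : 0 < diam C
  · have hCS : C ∈ S := ⟨⟨hC.1, hdC⟩, hxC⟩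
    exact absurd ⟨hC.1, hr_le C hCS, hC.2.1⟩ (hmin C hCS)
  · rwa [← hC.1.eq_singleton_of_not_diam_pos hxC hdC]

section Isolated

variable [IsUltrametricDist X]

lemma countable_setOf_closedBall_eq_singleton
    (h1 : {B : Set X | IsBall B ∧ 0 < diam B}.Countable) (h2 : StrictBallChainsShrink X)
    (h3 : MaxSubballsCover X) : {x : X | ∃ r > 0, closedBall x r = {x}}.Countable := by
  rcases subsingleton_or_nontrivial X with hX | hX
  · exact Set.subsingleton_of_subsingleton.countable
  have hmax := h1.biUnion fun B hB => (finite_setOf_isMaxSubball h3 hB.1 hB.2).countable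
  refine (hmax.preimage Set.singleton_injective).mono ?_
  rintro x ⟨r, hr, hx⟩
  obtain ⟨y, hy⟩ := exists_ne x
  obtain ⟨B, hB, hxB⟩ := exists_isMaxSubball_singleton h2 h3 hy.symm hr hx
  exact Set.mem_biUnion hB hxB

lemma borel_eq_generateFrom_isBall [MeasurableSpace X] [BorelSpace X]
    (h1 : {B : Set X | IsBall B ∧ 0 < diam B}.Countable) (h2 : StrictBallChainsShrink X)
    (h3 : MaxSubballsCover X) :
    ‹MeasurableSpace X› = MeasurableSpace.generateFrom {B : Set X | IsBall B} := by
  set T : Set (Set X) := {B | IsBall B ∧ 0 < diam B} ∪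
    (fun x => {x}) '' {x | ∃ r > 0, closedBall x r = {x}}
  have hT : T.Countable := h1.union ((countable_setOf_closedBall_eq_singleton h1 h2 h3).image _)
  have hTball : ∀ B ∈ T, IsBall B := by
    rintro B (hB | ⟨x, -, rfl⟩)
    exacts [hB.1, IsBall.singleton x]
  have hTbasis : ∀ U, IsOpen U → ∀ x ∈ U, ∃ B ∈ T, x ∈ B ∧ B ⊆ U := by
    intro U hU x hx
    obtain ⟨ε, hε, hεU⟩ := isOpen_iff.mp hU x hx
    have hball : IsBall (closedBall x (ε / 2)) := ⟨x, _, by positivity, rfl⟩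
    have hxball : x ∈ closedBall x (ε / 2) := mem_closedBall_self (by positivity)
    have hballU : closedBall x (ε / 2) ⊆ U :=
      (closedBall_subset_ball (by linarith)).trans hεU
    by_cases hd : 0 < diam (closedBall x (ε / 2))
    · exact ⟨_, Or.inl ⟨hball, hd⟩, hxball, hballU⟩
    · have hsing := hball.eq_singleton_of_not_diam_pos hxball hd
      exact ⟨{x}, Or.inr ⟨x, ⟨ε / 2, by positivity, hsing⟩, rfl⟩, rfl, hsing ▸ hballU⟩
  refine le_antisymm ?_ (MeasurableSpace.generateFrom_le fun B hB => hB.measurableSet)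
  rw [BorelSpace.measurable_eq (α := X), borel]
  refine MeasurableSpace.generateFrom_le fun U hU => ?_
  have hUT : U = ⋃₀ {B ∈ T | B ⊆ U} := by
    refine subset_antisymm (fun x hx => ?_) (Set.sUnion_subset fun B hB => hB.2)
    obtain ⟨B, hBT, hxB, hBU⟩ := hTbasis U hU x hx
    exact ⟨B, ⟨hBT, hBU⟩, hxB⟩
  rw [hUT]
  exact .sUnion (hT.mono fun B hB => hB.1)
    fun B hB => MeasurableSpace.measurableSet_generateFrom (hTball B hB.1)

end Isolated

section Averages

variable {α : Type*} [MeasurableSpace α] {ν : Measure α} {f : α → ℂ} {R S T : Set α}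

/-- `⨍ x in R, f x ∂ν = ⨍ x in S, f x ∂ν` with denominators cleared, so that it holds whenever
`R` or `S` is null. -/
def EqualAverages (ν : Measure α) (f : α → ℂ) (R S : Set α) : Prop :=
  (ν.real S : ℂ) * ∫ x in R, f x ∂ν = (ν.real R : ℂ) * ∫ x in S, f x ∂ν

lemma EqualAverages.refl : EqualAverages ν f R R := rfl

lemma EqualAverages.of_measure_eq_zero (h : ν R = 0) : EqualAverages ν f R S := by
  simp [EqualAverages, Measure.restrict_eq_zero.mpr h, measureReal_def, h]

lemma EqualAverages.trans (h₁ : EqualAverages ν f R S) (h₂ : EqualAverages ν f S T)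
    (hRS : R ⊆ S) (hS : ν S ≠ ⊤) : EqualAverages ν f R T := by
  rcases eq_or_ne (ν S) 0 with h0 | h0
  · exact .of_measure_eq_zero (measure_mono_null hRS h0)
  have hS' : (ν.real S : ℂ) ≠ 0 :=
    Complex.ofReal_ne_zero.mpr (ENNReal.toReal_ne_zero.mpr ⟨h0, hS⟩)
  refine mul_left_cancel₀ hS' ?_
  unfold EqualAverages at *
  linear_combination (ν.real T : ℂ) * h₁ + (ν.real R : ℂ) * h₂

lemma EqualAverages.iInter {S : ℕ → Set α} (hm : ∀ n, MeasurableSet (S n)) (hS : Antitone S)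
    (hfin : ν (S 0) ≠ ⊤) (hint : IntegrableOn f (S 0) ν) (h : ∀ n, EqualAverages ν f (S n) T) :
    EqualAverages ν f (⋂ n, S n) T := by
  have hfin' : ν (⋂ n, S n) ≠ ⊤ := measure_ne_top_of_subset (Set.iInter_subset S 0) hfin
  have hmeas : Tendsto (fun n => (ν.real (S n) : ℂ)) atTop (𝓝 (ν.real (⋂ n, S n))) :=
    (Complex.continuous_ofReal.tendsto _).comp <| (ENNReal.tendsto_toReal hfin').comp <|
      tendsto_measure_iInter_atTop (fun n => (hm n).nullMeasurableSet) hS ⟨0, hfin⟩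
  have hintegral := tendsto_setIntegral_of_antitone hm hS ⟨0, hint⟩
  exact tendsto_nhds_unique ((hintegral.const_mul _).congr h) (hmeas.mul_const _)

lemma norm_setIntegral_le_sqrt_mul_norm (f : Lp ℂ 2 ν) {s : Set α} (hs : MeasurableSet s)
    (hμs : ν s ≠ ⊤) : ‖∫ x in s, f x ∂ν‖ ≤ √(ν.real s) * ‖f‖ := by
  have h := L2.inner_indicatorConstLp_eq_inner_setIntegral ℂ hs hμs (1 : ℂ) f
  rw [RCLike.inner_apply, map_one, mul_one] at h
  rw [← h, Real.sqrt_eq_rpow]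
  refine (norm_inner_le_norm _ _).trans_eq ?_
  rw [norm_indicatorConstLp two_ne_zero ENNReal.ofNat_ne_top]
  norm_num

lemma measureReal_mul_sq_norm_setIntegral_le (f : Lp ℂ 2 ν) {C E : Set α} (hE : MeasurableSet E)
    (hμE : ν E ≠ ⊤) (hCE : EqualAverages ν f C E) :
    ν.real E * ‖∫ x in C, f x ∂ν‖ ^ 2 ≤ (ν.real C * ‖f‖) ^ 2 := by
  have hnorm : ν.real E * ‖∫ x in C, f x ∂ν‖ = ν.real C * ‖∫ x in E, f x ∂ν‖ := by
    simpa [abs_of_nonneg measureReal_nonneg] using congrArg norm hCE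
  have hCS := norm_setIntegral_le_sqrt_mul_norm f hE hμE
  rcases measureReal_nonneg.eq_or_lt with h0 | hpos
  · rw [← h0, zero_mul]
    positivity
  have hsq : (ν.real E * ‖∫ x in C, f x ∂ν‖) ^ 2 ≤ (ν.real C * ‖f‖) ^ 2 * ν.real E := calc
    _ = (ν.real C * ‖∫ x in E, f x ∂ν‖) ^ 2 := by rw [hnorm]
    _ ≤ (ν.real C * (√(ν.real E) * ‖f‖)) ^ 2 := by gcongr
    _ = (ν.real C * ‖f‖) ^ 2 * ν.real E := by
      rw [mul_pow, mul_pow, mul_pow, Real.sq_sqrt hpos.le]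
      ring
  refine le_of_mul_le_mul_left ?_ hpos
  linear_combination hsq

end Averages

lemma ae_eq_zero_of_setIntegral_eq_zero_of_isPiSystem {α E : Type*} [NormedAddCommGroup E]
    [NormedSpace ℝ E] [CompleteSpace E] {m : MeasurableSpace α} {μ : Measure α}
    {s : Set (Set α)} (h_eq : m = MeasurableSpace.generateFrom s) (h_inter : IsPiSystem s)
    {g : α → E} (hg : Integrable g μ) (h_univ : ∫ x, g x ∂μ = 0)
    (h_basic : ∀ t ∈ s, ∫ x in t, g x ∂μ = 0) : g =ᵐ[μ] 0 := by
  have h_all : ∀ t, MeasurableSet t → ∫ x in t, g x ∂μ = 0 := by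
    intro t ht
    induction t, ht using MeasurableSpace.induction_on_inter h_eq h_inter with
    | empty => simp
    | basic t ht => exact h_basic t ht
    | compl t ht ih => rw [setIntegral_compl ht hg, h_univ, ih, sub_zero]
    | iUnion S hd hm ih => simp [integral_iUnion hm hd hg.integrableOn, ih]
  exact hg.ae_eq_zero_of_forall_setIntegral_eq_zero fun t ht _ => h_all t ht

section L2

variable [MeasurableSpace X] [OpensMeasurableSpace X] {ν : Measure X}

lemma indicatorConstLp_add_mem_V0 {B C₁ C₂ : Set X} (h₁ : IsMaxSubball C₁ B)
    (h₂ : IsMaxSubball C₂ B) (hne : C₁ ≠ C₂) (hμ₁ : ν C₁ ≠ ⊤) (hμ₂ : ν C₂ ≠ ⊤) {a b : ℂ}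
    (hab : ν.real C₁ * a + ν.real C₂ * b = 0) :
    indicatorConstLp 2 h₁.1.measurableSet hμ₁ a + indicatorConstLp 2 h₂.1.measurableSet hμ₂ b
      ∈ V0 ν B := by
  classical
  refine ⟨⟨{C₁, C₂}, fun C => if C = C₁ then a else b, ?_, ?_⟩, ?_⟩
  · simp only [Finset.mem_insert, Finset.mem_singleton]
    rintro C (rfl | rfl) <;> assumption
  · filter_upwards [Lp.coeFn_add (indicatorConstLp 2 h₁.1.measurableSet hμ₁ a)
      (indicatorConstLp 2 h₂.1.measurableSet hμ₂ b), indicatorConstLp_coeFn (c := a),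
      indicatorConstLp_coeFn (c := b)] with x hx h₁x h₂x
    rw [hx, Pi.add_apply, h₁x, h₂x, Finset.sum_pair hne]
    simp [hne.symm, Set.indicator_apply]
  · rw [integral_congr_ae (Lp.coeFn_add _ _), integral_add' (integrable_indicatorConstLp _ _ _)
      (integrable_indicatorConstLp _ _ _), integral_indicatorConstLp, integral_indicatorConstLp]
    simpa using hab

lemma equalAverages_of_forall_inner_V0_eq_zero (f : Lp ℂ 2 ν) {B C₁ C₂ : Set X}
    (hperp : ∀ g ∈ V0 ν B, ⟪g, f⟫_ℂ = 0) (h₁ : IsMaxSubball C₁ B) (h₂ : IsMaxSubball C₂ B)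
    (hμ₁ : ν C₁ ≠ ⊤) (hμ₂ : ν C₂ ≠ ⊤) : EqualAverages ν f C₁ C₂ := by
  rcases eq_or_ne C₁ C₂ with rfl | hne
  · exact .refl
  have h := hperp _ (indicatorConstLp_add_mem_V0 h₁ h₂ hne hμ₁ hμ₂
    (a := ν.real C₂) (b := -ν.real C₁) (by ring))
  rw [inner_add_left, L2.inner_indicatorConstLp_eq_inner_setIntegral,
    L2.inner_indicatorConstLp_eq_inner_setIntegral] at h
  simp only [RCLike.inner_apply, Complex.conj_ofReal, map_neg] at h
  unfold EqualAverages
  linear_combination h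

end L2

section Chains

variable [IsUltrametricDist X] [MeasurableSpace X] {ν : Measure X}
  {f : X → ℂ} {B C : Set X}

lemma equalAverages_of_isMaxSubball [OpensMeasurableSpace X] (h3 : MaxSubballsCover X)
    (hfin : ∀ B, IsBall B → ν B ≠ ⊤) (hint : ∀ B, IsBall B → IntegrableOn f B ν)
    (hB : IsBall B) (hd : 0 < diam B)
    (hsib : ∀ C₁ C₂, IsMaxSubball C₁ B → IsMaxSubball C₂ B → EqualAverages ν f C₁ C₂)
    (hC : IsMaxSubball C B) : EqualAverages ν f C B := by
  obtain ⟨F, hF, hcov⟩ := h3 B hB hd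
  have hm : ∀ C' ∈ F, MeasurableSet C' := fun C' h => (hF C' h).1.measurableSet
  have hdisj : (F : Set (Set X)).PairwiseDisjoint id :=
    fun C₁ h₁ C₂ h₂ hne => (hF C₁ h₁).disjoint (hF C₂ h₂) hne
  unfold EqualAverages
  rw [hcov, integral_biUnion_finset F hm hdisj fun C' h => hint C' (hF C' h).1,
    measureReal_biUnion_finset (f := fun C => C) hdisj hm fun C' h => hfin C' (hF C' h).1,
    Complex.ofReal_sum, Finset.sum_mul, Finset.mul_sum]
  exact Finset.sum_congr rfl fun C' hC' => hsib C C' hC (hF C' hC')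

variable (h2 : StrictBallChainsShrink X) (h3 : MaxSubballsCover X)
  (hfin : ∀ B, IsBall B → ν B ≠ ⊤) (hint : ∀ B, IsBall B → IntegrableOn f B ν)
  (hmax : ∀ B C, IsBall B → 0 < diam B → IsMaxSubball C B → EqualAverages ν f C B)
include h2 h3 hfin hmax

/-- The chain of maximal subballs from `B` down to `C` is finite as its members have diameter
at least `δ`. -/
lemma equalAverages_of_subset_of_le_diam {δ : ℝ} (hδ : 0 < δ)
    (hCδ : ∀ B, IsBall B → C ⊂ B → δ ≤ diam B) (hC : IsBall C) :
    ∀ B, IsBall B → C ⊆ B → EqualAverages ν f C B := by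
  intro B
  induction B using (h2.wellFounded hδ).induction with | _ B ih => ?_
  intro hB hCB
  rcases eq_or_ssubset_of_subset hCB with rfl | hCB
  · exact .refl
  have hd : 0 < diam B := hδ.trans_le (hCδ B hB hCB)
  obtain ⟨F, hF, hcov⟩ := h3 B hB hd
  obtain ⟨C', hC'F, hCC'⟩ := exists_mem_superset_of_isMaxSubball_cover hF hcov hC hCB
  have hC' := hF C' hC'F
  have hCC'avg : EqualAverages ν f C C' := by
    rcases eq_or_ssubset_of_subset hCC' with rfl | hCC'
    · exact .refl
    · exact ih C' ⟨hC'.1, hCδ C' hC'.1 hCC', hC'.2.1⟩ hC'.1 hCC'.subset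
  exact hCC'avg.trans (hmax B C' hB hd hC') hCC' (hfin C' hC'.1)

lemma equalAverages_of_subset_of_diam_pos (hC : IsBall C) (hd : 0 < diam C) (hB : IsBall B)
    (hCB : C ⊆ B) : EqualAverages ν f C B :=
  equalAverages_of_subset_of_le_diam h2 h3 hfin hmax hd
    (fun _ hB' hCB' => diam_mono hCB'.subset hB'.isBounded) hC B hB hCB

lemma equalAverages_singleton_of_isolated {c : X} {r : ℝ} (hr : 0 < r)
    (hc : closedBall c r = {c}) (hB : IsBall B) (hcB : c ∈ B) :
    EqualAverages ν f {c} B := by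
  refine equalAverages_of_subset_of_le_diam h2 h3 hfin hmax hr (fun B' hB' hcB' => ?_)
    (IsBall.singleton c) B hB (Set.singleton_subset_iff.mpr hcB)
  obtain ⟨z, hzB', hzc⟩ := Set.exists_of_ssubset hcB'
  have hrz : r < dist z c := not_le.mp fun h => hzc (hc ▸ mem_closedBall.mpr h)
  exact hrz.le.trans (dist_le_diam_of_mem hB'.isBounded hzB' (hcB'.subset rfl))

include hint in
lemma equalAverages_singleton_of_not_isolated [OpensMeasurableSpace X] {c : X}
    (hc : ∀ r > 0, closedBall c r ≠ {c}) (hB : IsBall B) (hcB : c ∈ B) :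
    EqualAverages ν f {c} B := by
  obtain ⟨R, hR, rfl⟩ := hB.eq_closedBall_of_mem hcB
  rcases hR.eq_or_lt with rfl | hR
  · rw [closedBall_zero]
    exact .refl
  set S : ℕ → Set X := fun n => closedBall c (R / (n + 1))
  have hS : ∀ n, IsBall (S n) := fun n => ⟨c, _, by positivity, rfl⟩
  have hSR : ∀ n, S n ⊆ closedBall c R := fun n =>
    closedBall_subset_closedBall (div_le_self hR.le (by linarith [n.cast_nonneg (α := ℝ)]))
  have hanti : Antitone S := fun m n hmn =>
    closedBall_subset_closedBall (by gcongr)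
  have hlim : Tendsto (fun n : ℕ => R / (n + 1)) atTop (𝓝 0) := by
    simpa [div_eq_mul_inv] using tendsto_one_div_add_atTop_nhds_zero_nat.const_mul R
  have hinter : ⋂ n, S n = {c} := by
    ext y
    simp only [S, Set.mem_iInter, mem_closedBall, Set.mem_singleton_iff]
    refine ⟨fun h => dist_le_zero.mp (ge_of_tendsto' hlim h), ?_⟩
    rintro rfl n
    rw [dist_self]
    positivity
  rw [← hinter]
  refine .iInter (fun n => (hS n).measurableSet) hanti (hfin _ (hS 0)) (hint _ (hS 0))
    fun n => equalAverages_of_subset_of_diam_pos h2 h3 hfin hmax (hS n) ?_ ⟨c, R, hR.le, rfl⟩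
      (hSR n)
  refine (hS n).diam_pos_iff.mpr ((Set.nontrivial_iff_ne_singleton ?_).mpr (hc _ (by positivity)))
  exact mem_closedBall_self (by positivity)

include hint in
lemma equalAverages_of_subset [OpensMeasurableSpace X] (hC : IsBall C) (hB : IsBall B)
    (hCB : C ⊆ B) : EqualAverages ν f C B := by
  by_cases hd : 0 < diam C
  · exact equalAverages_of_subset_of_diam_pos h2 h3 hfin hmax hC hd hB hCB
  obtain ⟨c, hc⟩ := hC.nonempty
  obtain rfl := hC.eq_singleton_of_not_diam_pos hc hd
  by_cases hiso : ∃ r > 0, closedBall c r = {c}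
  · obtain ⟨r, hr, hcr⟩ := hiso
    exact equalAverages_singleton_of_isolated h2 h3 hfin hmax hr hcr hB (hCB rfl)
  · exact equalAverages_singleton_of_not_isolated h2 h3 hfin hint hmax
      (fun r hr h => hiso ⟨r, hr, h⟩) hB (hCB rfl)

end Chains

section Vanishing

variable [MeasurableSpace X] [OpensMeasurableSpace X] {ν : Measure X}

lemma setIntegral_eq_zero_of_iSup_measure_eq_top (f : Lp ℂ 2 ν)
    (hfin : ∀ B, IsBall B → ν B ≠ ⊤) (hsup : ⨆ (B : Set X) (_ : IsBall B), ν B = ⊤)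
    {C : Set X} (hC : IsBall C) (havg : ∀ E, IsBall E → C ⊆ E → EqualAverages ν f C E) :
    ∫ x in C, f x ∂ν = 0 := by
  by_contra hne
  set K := (ν.real C * ‖f‖) ^ 2 / ‖∫ x in C, f x ∂ν‖ ^ 2
  have hle : ⨆ (B : Set X) (_ : IsBall B), ν B ≤ ENNReal.ofReal K := by
    refine iSup₂_le fun D hD => ?_
    obtain ⟨E, hE, hCE, hDE⟩ := hC.exists_superset hD
    calc ν D ≤ ν E := measure_mono hDE
      _ = ENNReal.ofReal (ν.real E) := (ofReal_measureReal (hfin E hE)).symm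
      _ ≤ ENNReal.ofReal K := ENNReal.ofReal_le_ofReal <| (le_div_iff₀ (by positivity)).mpr <|
          measureReal_mul_sq_norm_setIntegral_le f hE.measurableSet (hfin E hE) (havg E hE hCE)
  exact ENNReal.ofReal_ne_top (top_le_iff.mp (hsup ▸ hle))

lemma ae_eq_zero_of_forall_setIntegral_isBall_eq_zero [IsUltrametricDist X]
    (hgen : ‹MeasurableSpace X› = MeasurableSpace.generateFrom {B : Set X | IsBall B})
    {f : X → ℂ} (hint : ∀ B, IsBall B → IntegrableOn f B ν)
    (hzero : ∀ B, IsBall B → ∫ x in B, f x ∂ν = 0) : f =ᵐ[ν] 0 := by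
  rcases isEmpty_or_nonempty X with hX | ⟨⟨x₀⟩⟩
  · exact .of_forall isEmptyElim
  have hball : ∀ n : ℕ, IsBall (closedBall x₀ n) := fun n => ⟨x₀, n, n.cast_nonneg, rfl⟩
  have hrestrict : ∀ n : ℕ, f =ᵐ[ν.restrict (closedBall x₀ n)] 0 := by
    intro n
    refine ae_eq_zero_of_setIntegral_eq_zero_of_isPiSystem hgen isPiSystem_setOf_isBall
      (hint _ (hball n)) (hzero _ (hball n)) fun C hC => ?_
    rw [Measure.restrict_restrict hC.measurableSet]
    rcases (C ∩ closedBall x₀ n).eq_empty_or_nonempty with h | h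
    · simp [h]
    rcases IsBall.subset_or_subset hC (hball n) h with h | h
    · rw [Set.inter_eq_left.mpr h, hzero C hC]
    · rw [Set.inter_eq_right.mpr h, hzero _ (hball n)]
  have hall := (ae_restrict_iUnion_iff _ _).mpr hrestrict
  rwa [iUnion_closedBall_nat, Measure.restrict_univ] at hall

end Vanishing

end

theorem stmt_8_general {X : Type*} [MetricSpace X]
    [MeasurableSpace X] [BorelSpace X]
    (hultra : ∀ x y z : X, dist x y ≤ max (dist x z) (dist z y))
    (h1 : {B : Set X | IsBall B ∧ 0 < Metric.diam B}.Countable)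
    (h2 : ∀ D : ℕ → Set X, (∀ k, IsBall (D k)) → (∀ k, D (k + 1) ⊂ D k) →
      Filter.Tendsto (fun k => Metric.diam (D k)) Filter.atTop (nhds 0))
    (h3 : ∀ B : Set X, IsBall B → 0 < Metric.diam B →
      ∃ F : Finset (Set X), (∀ C ∈ F, IsMaxSubball C B) ∧ B = ⋃ C ∈ F, C)
    (ν : Measure X)
    (hfin : ∀ B : Set X, IsBall B → ν B < ⊤)
    (hsup : (⨆ (B : Set X) (_ : IsBall B), ν B) = ⊤) :
    (Submodule.span ℂ
        (⋃ B ∈ {B : Set X | IsBall B ∧ 0 < Metric.diam B}, V0 ν B)).topologicalClosure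
      = ⊤ := by
  have : IsUltrametricDist X := ⟨fun x y z => hultra x z y⟩
  have hfin' : ∀ B, IsBall B → ν B ≠ ⊤ := fun B hB => (hfin B hB).ne
  rw [Submodule.topologicalClosure_eq_top_iff, Submodule.eq_bot_iff]
  intro f hf
  have hint : ∀ B, IsBall B → IntegrableOn f B ν := fun B hB =>
    integrableOn_Lp_of_measure_ne_top f one_le_two (hfin' B hB)
  have hperp : ∀ B, IsBall B → 0 < diam B → ∀ g ∈ V0 ν B, ⟪g, f⟫_ℂ = 0 := fun B hB hd g hg =>
    (Submodule.mem_orthogonal _ f).mp hf g (Submodule.subset_span (Set.mem_biUnion ⟨hB, hd⟩ hg))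
  have hmax : ∀ B C, IsBall B → 0 < diam B → IsMaxSubball C B → EqualAverages ν f C B :=
    fun B C hB hd => equalAverages_of_isMaxSubball h3 hfin' hint hB hd fun C₁ C₂ h₁ h₂ =>
      equalAverages_of_forall_inner_V0_eq_zero f (hperp B hB hd) h₁ h₂ (hfin' C₁ h₁.1)
        (hfin' C₂ h₂.1)
  have hzero : ∀ C, IsBall C → ∫ x in C, f x ∂ν = 0 := fun C hC =>
    setIntegral_eq_zero_of_iSup_measure_eq_top f hfin' hsup hC fun E hE hCE =>
      equalAverages_of_subset h2 h3 hfin' hint hmax hC hE hCE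
  exact Lp.eq_zero_iff_ae_eq_zero.mpr <| ae_eq_zero_of_forall_setIntegral_isBall_eq_zero
    (borel_eq_generateFrom_isBall h1 h2 h3) hint hzero

/-- If the ultrametric space `X` (complete, with the countability,
decreasing-diameter and finite-branching conditions) carries a Borel measure `ν`
finite on balls whose supremum over all balls is infinite, then the closed linear
span of the union of the spaces `V⁰_B` over all balls `B` of nonzero diameter is
all of `L²(X,ν)`. -/
theorem stmt_8 {X : Type*} [MetricSpace X] [CompleteSpace X]
    [MeasurableSpace X] [BorelSpace X]
    (hultra : ∀ x y z : X, dist x y ≤ max (dist x z) (dist z y))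
    (h1 : {B : Set X | IsBall B ∧ 0 < Metric.diam B}.Countable)
    (h2 : ∀ D : ℕ → Set X, (∀ k, IsBall (D k)) → (∀ k, D (k + 1) ⊂ D k) →
      Filter.Tendsto (fun k => Metric.diam (D k)) Filter.atTop (nhds 0))
    (h3 : ∀ B : Set X, IsBall B → 0 < Metric.diam B →
      ∃ F : Finset (Set X), (∀ C ∈ F, IsMaxSubball C B) ∧ B = ⋃ C ∈ F, C)
    (ν : Measure X)
    (hfin : ∀ B : Set X, IsBall B → ν B < ⊤)
    (hsup : (⨆ (B : Set X) (_ : IsBall B), ν B) = ⊤) :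
    (Submodule.span ℂ
        (⋃ B ∈ {B : Set X | IsBall B ∧ 0 < Metric.diam B}, V0 ν B)).topologicalClosure
      = ⊤ :=
  stmt_8_general hultra h1 h2 h3 ν hfin hsup
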